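/- arXiv:math/9806164 — 2 statements merged into one kernel-verified Lean document; each statement's English description precedes it below -/
import Mathlib

section
/- For each λ > 0 there exist a constant C ≥ 1 and a_0 < 2 such that for all a ∈ [a_0, 2] and all integers k ≥ 1 the following holds: if |(f_a^j)'(1)| ≥ e^{λ j} for all j ≤ k (derivative in the space variable x), then (1/C) ≤ |D_a ξ_{k+1}(a)| / |(f_a^k)'(1)| ≤ C, where D_a ξ_{k+1}(a) denotes the derivative with respect to the parameter a of the map a ↦ ξ_{k+1}(a) = f_a^{k+1}(0). -/
open Filter Topology Finset

noncomputable section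

/-- The quadratic family `f_a(x) = 1 - a x²`. -/
def f (a x : ℝ) : ℝ := 1 - a * x ^ 2

/-- `ξ n a = f_a^n(0)`, the critical orbit as a function of the parameter. -/
def xi (n : ℕ) (a : ℝ) : ℝ := (f a)^[n] 0

/-- space derivative of `f_a^n` at `1`, as a product. -/
def Pd (a : ℝ) : ℕ → ℝ
  | 0 => 1
  | n + 1 => (-2 * a * xi (n + 1) a) * Pd a n

/-- parameter derivative of `xi n`. -/
def Dd (a : ℝ) : ℕ → ℝ
  | 0 => 0
  | n + 1 => -(xi n a) ^ 2 + (-2 * a * xi n a) * Dd a n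

lemma xi_succ (n : ℕ) (a : ℝ) : xi (n + 1) a = 1 - a * (xi n a) ^ 2 := by
  simp [xi, Function.iterate_succ_apply', f]

lemma xi_zero (a : ℝ) : xi 0 a = 0 := rfl

lemma xi_one (a : ℝ) : xi 1 a = 1 := by simp [xi_succ, xi_zero]

lemma hasDerivAt_f (a x : ℝ) : HasDerivAt (f a) (-2 * a * x) x := by
  have h : HasDerivAt (fun x : ℝ => 1 - a * x ^ 2) (0 - a * (2 * x ^ 1)) x := by
    exact (hasDerivAt_const x 1).sub (((hasDerivAt_pow 2 x)).const_mul a)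
  convert h using 1
  · rfl
  · ring

lemma diff_f (a : ℝ) : Differentiable ℝ (f a) := fun x => (hasDerivAt_f a x).differentiableAt

lemma iter_one (a : ℝ) (n : ℕ) : (f a)^[n] 1 = xi (n + 1) a := by
  have : f a 0 = 1 := by simp [f]
  simp [xi, Function.iterate_succ_apply, this]

lemma hasDerivAt_iter (a : ℝ) : ∀ n : ℕ, HasDerivAt ((f a)^[n]) (Pd a n) 1 := by
  intro n
  induction n with
  | zero => simpa [Pd] using (hasDerivAt_id (1 : ℝ))
  | succ n ih =>
    have h := (hasDerivAt_f a ((f a)^[n] 1)).comp 1 ih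
    rw [iter_one] at h
    rw [Function.iterate_succ']
    exact h

lemma deriv_iter (a : ℝ) (n : ℕ) : deriv ((f a)^[n]) 1 = Pd a n :=
  (hasDerivAt_iter a n).deriv

lemma hasDerivAt_xi (a : ℝ) : ∀ n : ℕ, HasDerivAt (xi n) (Dd a n) a := by
  intro n
  induction n with
  | zero =>
    have : (xi 0) = fun _ : ℝ => (0 : ℝ) := by funext b; simp [xi_zero]
    rw [this]
    simpa [Dd] using hasDerivAt_const a (0 : ℝ)
  | succ n ih =>
    have hfun : (xi (n + 1)) = fun b : ℝ => 1 - b * (xi n b) ^ 2 := by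
      funext b; exact xi_succ n b
    have h : HasDerivAt (fun b : ℝ => 1 - b * (xi n b) ^ 2)
        (0 - (1 * (xi n a) ^ 2 + a * (2 * (xi n a) ^ 1 * Dd a n))) a := by
      exact (hasDerivAt_const a 1).sub ((hasDerivAt_id a).mul (ih.pow 2))
    rw [hfun]
    convert h using 1
    simp [Dd]
    ring

lemma deriv_xi (a : ℝ) (n : ℕ) : deriv (xi n) a = Dd a n :=
  (hasDerivAt_xi a n).deriv

lemma cont_xi (n : ℕ) : Continuous (fun a => xi n a) := by
  induction n with
  | zero => simpa [xi_zero] using continuous_const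
  | succ n ih =>
    have : (fun a => xi (n + 1) a) = fun a => 1 - a * (xi n a) ^ 2 := by
      funext b; exact xi_succ n b
    rw [this]; fun_prop

lemma cont_Pd (n : ℕ) : Continuous (fun a => Pd a n) := by
  induction n with
  | zero => simpa [Pd] using continuous_const
  | succ n ih =>
    have : (fun a => Pd a (n + 1)) = fun a => (-2 * a * xi (n + 1) a) * Pd a n := by
      funext b; simp [Pd]
    rw [this]
    exact (((continuous_const.mul continuous_id).mul (cont_xi (n + 1)))).mul ih

lemma xi_bound (a : ℝ) (h0 : 0 ≤ a) (h2 : a ≤ 2) : ∀ n, -1 ≤ xi n a ∧ xi n a ≤ 1 := by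
  intro n
  induction n with
  | zero => norm_num [xi_zero]
  | succ n ih =>
    rw [xi_succ]
    obtain ⟨h1, h2'⟩ := ih
    constructor
    · nlinarith [sq_nonneg (xi n a)]
    · nlinarith [sq_nonneg (xi n a)]

lemma xi_at_two : ∀ n, 1 ≤ n → xi (n + 1) 2 = -1 := by
  intro n hn
  induction n with
  | zero => omega
  | succ n ih =>
    rcases Nat.eq_zero_or_pos n with rfl | hp
    · rw [xi_succ, xi_one]; norm_num
    · rw [xi_succ, ih hp]; norm_num

lemma Pd_at_two : ∀ n, 1 ≤ n → Pd 2 n = -(4 : ℝ) ^ n := by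
  intro n hn
  induction n with
  | zero => omega
  | succ n ih =>
    rcases Nat.eq_zero_or_pos n with rfl | hp
    · show (-2 * 2 * xi (0 + 1) 2) * Pd 2 0 = -(4 : ℝ) ^ (0 + 1)
      rw [show (0:ℕ) + 1 = 1 from rfl, xi_one]
      norm_num [Pd]
    · show (-2 * 2 * xi (n + 1) 2) * Pd 2 n = -(4 : ℝ) ^ (n + 1)
      rw [xi_at_two n hp, ih hp]
      ring

lemma xi_sq_at_two (j : ℕ) (hj : 1 ≤ j) : (xi j 2) ^ 2 = 1 := by
  rcases Nat.lt_or_ge j 2 with h | h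
  · have : j = 1 := by omega
    subst this; simp [xi_one]
  · obtain ⟨m, rfl⟩ : ∃ m, j = m + 1 := ⟨j - 1, by omega⟩
    rw [xi_at_two m (by omega)]; norm_num

lemma t_at_two (j : ℕ) (hj : 1 ≤ j) : (xi j 2) ^ 2 / Pd 2 j = -((1 / 4 : ℝ)) ^ j := by
  rw [xi_sq_at_two j hj, Pd_at_two j hj]
  rw [div_neg, one_div_pow]

/-- key identity: `Dd a (k+1) = -(Pd a k) * ∑_{j=1}^k ξ_j² / Pd_j`. -/
lemma key (a : ℝ) : ∀ k, 1 ≤ k → (∀ j, 1 ≤ j → j ≤ k → Pd a j ≠ 0) →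
    Dd a (k + 1) = -(Pd a k) * ∑ j ∈ Icc 1 k, (xi j a) ^ 2 / Pd a j := by
  intro k hk
  induction k with
  | zero => omega
  | succ k ih =>
    intro hne
    rcases Nat.eq_or_lt_of_le hk with h | h
    · -- k + 1 = 1, i.e. k = 0
      have hk0 : k = 0 := by omega
      subst hk0
      have h1 : Pd a 1 ≠ 0 := hne 1 le_rfl le_rfl
      show -(xi 1 a) ^ 2 + (-2 * a * xi 1 a) * Dd a 1 = _
      have hD1 : Dd a 1 = 0 := by simp [Dd, xi_zero]
      have hx := xi_one a
      simp only [hD1, hx, Finset.Icc_self, Finset.sum_singleton, mul_zero, add_zero, one_pow]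
      field_simp
    · have hk1 : 1 ≤ k := by omega
      have ihh := ih hk1 (fun j h1 h2 => hne j h1 (by omega))
      have hPsucc : Pd a (k + 1) = (-2 * a * xi (k + 1) a) * Pd a k := rfl
      have hne1 : Pd a (k + 1) ≠ 0 := hne (k + 1) (by omega) le_rfl
      have hnek : Pd a k ≠ 0 := hne k hk1 (by omega)
      rw [Finset.sum_Icc_succ_top (by omega : 1 ≤ k + 1)]
      show -(xi (k + 1) a) ^ 2 + (-2 * a * xi (k + 1) a) * Dd a (k + 1) = _
      rw [ihh]
      have expand : -(Pd a (k + 1)) *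
          ((∑ j ∈ Icc 1 k, xi j a ^ 2 / Pd a j) + xi (k + 1) a ^ 2 / Pd a (k + 1)) =
          -(Pd a (k + 1)) * (∑ j ∈ Icc 1 k, xi j a ^ 2 / Pd a j) - xi (k + 1) a ^ 2 := by
        have hcancel : Pd a (k + 1) * (xi (k + 1) a ^ 2 / Pd a (k + 1)) = xi (k + 1) a ^ 2 := by
          field_simp
        rw [mul_add, neg_mul (Pd a (k + 1)) (xi (k + 1) a ^ 2 / Pd a (k + 1)), hcancel]
        ring
      rw [expand, hPsucc]
      ring

lemma geo_sum (m : ℕ) : ∑ j ∈ Icc 1 m, ((1 / 4 : ℝ)) ^ j = (1 - (1 / 4) ^ m) / 3 := by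
  induction m with
  | zero => simp
  | succ m ih =>
    rw [Finset.sum_Icc_succ_top (by omega : 1 ≤ m + 1), ih]
    ring

lemma geo_bounds (m : ℕ) (hm : 1 ≤ m) :
    (1 / 4 : ℝ) ≤ ∑ j ∈ Icc 1 m, ((1 / 4 : ℝ)) ^ j ∧
      ∑ j ∈ Icc 1 m, ((1 / 4 : ℝ)) ^ j ≤ 1 / 3 := by
  rw [geo_sum]
  have h1 : ((1 / 4 : ℝ)) ^ m ≤ (1 / 4) ^ 1 := by
    apply pow_le_pow_of_le_one (by norm_num) (by norm_num) hm
  have h2 : (0 : ℝ) ≤ (1 / 4) ^ m := by positivity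
  constructor <;> [nlinarith; nlinarith]

lemma my_geom_sum_le {r : ℝ} (h0 : 0 ≤ r) (h1 : r < 1) (n : ℕ) :
    ∑ i ∈ range n, r ^ i ≤ (1 - r)⁻¹ := by
  have hne : r ≠ 1 := ne_of_lt h1
  have h2 : (0:ℝ) < 1 - r := by linarith
  have hne2 : (1:ℝ) - r ≠ 0 := ne_of_gt h2
  rw [geom_sum_eq hne, div_le_iff_of_neg (by linarith : r - 1 < 0)]
  have hkey : (1 - r)⁻¹ * (r - 1) = -1 := by
    field_simp
    ring
  rw [hkey]
  have : (0:ℝ) ≤ r ^ n := pow_nonneg h0 n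
  linarith

lemma tail_bound {r : ℝ} (h0 : 0 ≤ r) (h1 : r < 1) (N k : ℕ) :
    ∑ j ∈ Ioc N k, r ^ j ≤ r ^ (N + 1) * (1 - r)⁻¹ := by
  rcases le_or_gt k N with h | h
  · rw [Finset.Ioc_eq_empty (by omega)]
    simp only [Finset.sum_empty]
    exact mul_nonneg (pow_nonneg h0 _) (inv_nonneg.mpr (by linarith))
  · have hIoc : Ioc N k = Ico (N + 1) (k + 1) := by
      rw [Finset.Ico_add_one_right_eq_Icc, Finset.Icc_add_one_left_eq_Ioc]
    rw [hIoc, Finset.sum_Ico_eq_sum_range]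
    have : ∀ i, r ^ (N + 1 + i) = r ^ (N + 1) * r ^ i := fun i => pow_add r _ _
    simp_rw [this, ← Finset.mul_sum]
    have := my_geom_sum_le h0 h1 (k + 1 - (N + 1))
    have hp : (0:ℝ) ≤ r ^ (N + 1) := by positivity
    exact mul_le_mul_of_nonneg_left this hp

/-- Lemma 1: as long as the space derivative along the critical orbit grows
exponentially, the parameter derivative of `ξ_{k+1}` is comparable to the space
derivative of `f_a^k` at the critical value `1`. -/
theorem stmt_8 (lam : ℝ) (hlam : 0 < lam) :
    ∃ C : ℝ, 1 ≤ C ∧ ∃ a₀ : ℝ, a₀ < 2 ∧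
      ∀ a ∈ Set.Icc a₀ 2, ∀ k : ℕ, 1 ≤ k →
        (∀ j ≤ k, Real.exp (lam * j) ≤ |deriv ((f a)^[j]) 1|) →
        1 / C ≤ |deriv (xi (k + 1)) a| / |deriv ((f a)^[k]) 1| ∧
          |deriv (xi (k + 1)) a| / |deriv ((f a)^[k]) 1| ≤ C := by
  refine ⟨8, by norm_num, ?_⟩
  set r : ℝ := Real.exp (-lam) with hr
  have hr0 : 0 < r := Real.exp_pos _
  have hr1 : r < 1 := by
    rw [hr, Real.exp_lt_one_iff]; linarith
  obtain ⟨N0, hN0⟩ := exists_pow_lt_of_lt_one (show (0:ℝ) < (1 - r) / 16 by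
    have : 0 < 1 - r := by linarith
    positivity) hr1
  set N : ℕ := max N0 1 with hN
  have hN1 : 1 ≤ N := le_max_right _ _
  -- tail bound
  have htail : ∀ k : ℕ, ∑ j ∈ Ioc N k, r ^ j ≤ 1 / 16 := by
    intro k
    have h1 := tail_bound hr0.le hr1 N k
    have h2 : r ^ (N + 1) ≤ r ^ N0 := by
      apply pow_le_pow_of_le_one hr0.le hr1.le
      omega
    have h3 : r ^ (N + 1) * (1 - r)⁻¹ ≤ (1 - r) / 16 * (1 - r)⁻¹ := by
      apply mul_le_mul_of_nonneg_right (le_trans h2 hN0.le)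
      have : 0 < 1 - r := by linarith
      positivity
    have hne2 : (1:ℝ) - r ≠ 0 := by linarith
    have h4 : (1 - r) / 16 * (1 - r)⁻¹ = 1 / 16 := by
      field_simp
    linarith
  -- continuity at a = 2 of the head terms
  have hcont : ∀ j ∈ Icc 1 N, ContinuousAt (fun a => (xi j a) ^ 2 / Pd a j) 2 := by
    intro j hj
    simp only [Finset.mem_Icc] at hj
    have hPne : Pd 2 j ≠ 0 := by
      rw [Pd_at_two j hj.1]
      simp only [ne_eq, neg_eq_zero]
      positivity
    exact (((cont_xi j).pow 2).continuousAt).div (cont_Pd j).continuousAt hPne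
  have hev : ∀ᶠ a in 𝓝 2, ∀ j ∈ Icc 1 N,
      |(xi j a) ^ 2 / Pd a j - (xi j 2) ^ 2 / Pd 2 j| ≤ 1 / (16 * N) := by
    rw [Finset.eventually_all]
    intro j hj
    have := (hcont j hj).tendsto
    have hpos : (0:ℝ) < 1 / (16 * N) := by positivity
    have := Metric.tendsto_nhds.mp this (1 / (16 * N)) hpos
    filter_upwards [this] with a ha
    rw [Real.dist_eq] at ha
    exact ha.le
  obtain ⟨δ, hδ0, hδ⟩ := Metric.eventually_nhds_iff.mp hev
  refine ⟨max (2 - δ / 2) 1, max_lt (by linarith) one_lt_two, ?_⟩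
  rintro a ⟨ha1, ha2⟩ k hk hyp
  have haL : 1 ≤ a := le_trans (le_max_right _ _) ha1
  have haD : 2 - δ / 2 ≤ a := le_trans (le_max_left _ _) ha1
  have hdist : dist a 2 < δ := by
    rw [Real.dist_eq, abs_lt]
    constructor <;> linarith
  -- basic facts from the hypothesis
  have hyp' : ∀ j, 1 ≤ j → j ≤ k → Real.exp (lam * j) ≤ |Pd a j| := by
    intro j h1 h2
    have := hyp j h2
    rwa [deriv_iter] at this
  have hne : ∀ j, 1 ≤ j → j ≤ k → Pd a j ≠ 0 := by
    intro j h1 h2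
    intro h0
    have := hyp' j h1 h2
    rw [h0, abs_zero] at this
    exact absurd this (not_le.mpr (Real.exp_pos _))
  -- the sum S
  set S : ℝ := ∑ j ∈ Icc 1 k, (xi j a) ^ 2 / Pd a j with hS
  have hkey : Dd a (k + 1) = -(Pd a k) * S := key a k hk hne
  have hPk : Pd a k ≠ 0 := hne k hk le_rfl
  -- the ratio equals |S|
  have hratio : |deriv (xi (k + 1)) a| / |deriv ((f a)^[k]) 1| = |S| := by
    rw [deriv_xi, deriv_iter, hkey, abs_mul, abs_neg, mul_comm, mul_div_assoc,
      div_self (abs_ne_zero.mpr hPk), mul_one]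
  rw [hratio]
  -- split the sum at m = min k N
  set m : ℕ := min k N with hm
  have hm1 : 1 ≤ m := le_min hk hN1
  have hmk : m ≤ k := min_le_left _ _
  have hmN : m ≤ N := min_le_right _ _
  have hIcc : ∀ M : ℕ, Icc 1 M = Ioc 0 M := fun M => Finset.Icc_add_one_left_eq_Ioc 0 M
  have hsplit : (∑ j ∈ Ioc 0 m, xi j a ^ 2 / Pd a j) + (∑ j ∈ Ioc m k, xi j a ^ 2 / Pd a j)
      = ∑ j ∈ Ioc 0 k, xi j a ^ 2 / Pd a j :=
    Finset.sum_Ioc_consecutive _ (Nat.zero_le m) hmk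
  have hSeq : S = (∑ j ∈ Icc 1 m, xi j a ^ 2 / Pd a j)
      + (∑ j ∈ Ioc m k, xi j a ^ 2 / Pd a j) := by
    rw [hS, hIcc, hIcc, ← hsplit]
  -- head error estimate
  have hmem : ∀ j ∈ Icc 1 m, j ∈ Icc 1 N := by
    intro j hj
    simp only [Finset.mem_Icc] at hj ⊢
    omega
  have hNpos : (0:ℝ) < (N : ℝ) := by
    exact_mod_cast Nat.lt_of_lt_of_le Nat.zero_lt_one hN1
  have hhead_err : |(∑ j ∈ Icc 1 m, xi j a ^ 2 / Pd a j)
      - (∑ j ∈ Icc 1 m, xi j 2 ^ 2 / Pd 2 j)| ≤ 1 / 16 := by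
    rw [← Finset.sum_sub_distrib]
    refine le_trans (Finset.abs_sum_le_sum_abs _ _) ?_
    have hterm : ∀ j ∈ Icc 1 m, |xi j a ^ 2 / Pd a j - xi j 2 ^ 2 / Pd 2 j| ≤ 1 / (16 * N) :=
      fun j hj => hδ hdist j (hmem j hj)
    refine le_trans (Finset.sum_le_sum hterm) ?_
    rw [Finset.sum_const, nsmul_eq_mul, Nat.card_Icc]
    have hcard : ((m + 1 - 1 : ℕ) : ℝ) ≤ (N : ℝ) := by
      exact_mod_cast by omega
    calc ((m + 1 - 1 : ℕ) : ℝ) * (1 / (16 * N)) ≤ (N : ℝ) * (1 / (16 * N)) := by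
          apply mul_le_mul_of_nonneg_right hcard
          positivity
      _ = 1 / 16 := by field_simp
  -- head value at a = 2
  have hhead_two : (∑ j ∈ Icc 1 m, xi j 2 ^ 2 / Pd 2 j)
      = -(∑ j ∈ Icc 1 m, ((1 / 4 : ℝ)) ^ j) := by
    rw [← Finset.sum_neg_distrib]
    apply Finset.sum_congr rfl
    intro j hj
    simp only [Finset.mem_Icc] at hj
    exact t_at_two j hj.1
  obtain ⟨hG1, hG2⟩ := geo_bounds m hm1
  -- tail estimate
  have htail_abs : |∑ j ∈ Ioc m k, xi j a ^ 2 / Pd a j| ≤ 1 / 16 := by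
    refine le_trans (Finset.abs_sum_le_sum_abs _ _) ?_
    have hterm : ∀ j ∈ Ioc m k, |xi j a ^ 2 / Pd a j| ≤ r ^ j := by
      intro j hj
      simp only [Finset.mem_Ioc] at hj
      have hj1 : 1 ≤ j := by omega
      have hxb := xi_bound a (by linarith) ha2 j
      have hx2 : xi j a ^ 2 ≤ 1 := by nlinarith [hxb.1, hxb.2]
      have hx2' : (0:ℝ) ≤ xi j a ^ 2 := sq_nonneg _
      have hPj := hyp' j hj1 hj.2
      have hepos : (0:ℝ) < Real.exp (lam * j) := Real.exp_pos _
      rw [abs_div, abs_of_nonneg hx2']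
      have hstep : xi j a ^ 2 / |Pd a j| ≤ 1 / Real.exp (lam * j) :=
        div_le_div₀ zero_le_one hx2 hepos hPj
      refine le_trans hstep (le_of_eq ?_)
      rw [one_div, ← Real.exp_neg, hr, ← Real.exp_nat_mul]
      ring_nf
    refine le_trans (Finset.sum_le_sum hterm) ?_
    rcases le_or_gt k N with hkN | hkN
    · have : m = k := by omega
      rw [this, Finset.Ioc_self, Finset.sum_empty]
      norm_num
    · have : m = N := by omega
      rw [this]
      exact htail k
  -- combine
  have hH := abs_le.mp hhead_err
  have hT := abs_le.mp htail_abs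
  rw [hhead_two] at hH
  have hSle : S ≤ -(1/8 : ℝ) := by
    rw [hSeq]; linarith [hH.2, hT.2]
  have hSge : -(1/2 : ℝ) ≤ S := by
    rw [hSeq]; linarith [hH.1, hT.1]
  have hSnp : S ≤ 0 := by linarith
  rw [abs_of_nonpos hSnp]
  constructor
  · norm_num; linarith
  · linarith
end
end

section
/- For every a ∈ [12/7, 2] and every x ∈ [−1, −3/4], one has 0 ≤ 3(x + 1) ≤ f_a(x) + 1; that is, near the left endpoint −1 (which is fixed when a = 2), one application of f_a increases the distance to −1 by at least a factor 3 as long as the point stays in [−1, −3/4]. -/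
noncomputable section

lemma f_le_f_of_le {a b : ℝ} (hab : a ≤ b) (x : ℝ) : f b x ≤ f a x := by
  unfold f
  nlinarith [mul_le_mul_of_nonneg_right hab (sq_nonneg x)]

lemma f_two_add_one_sub (x : ℝ) : f 2 x + 1 - 3 * (x + 1) = -(2 * x + 1) * (x + 1) := by
  unfold f
  ring

lemma three_mul_add_one_le_f_add_one {a x : ℝ} (ha : a ≤ 2) (hx₁ : -1 ≤ x) (hx₂ : x ≤ -1 / 2) :
    3 * (x + 1) ≤ f a x + 1 := by
  have hprod : 0 ≤ -(2 * x + 1) * (x + 1) := mul_nonneg (by linarith) (by linarith)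
  linarith [f_le_f_of_le ha x, f_two_add_one_sub x]

/-- Near the fixed endpoint `-1`, one application of `f_a` (for `a` close to `2`)
expands the distance to `-1` by at least a factor `3`, as long as the point stays
in `[-1, -3/4]`. -/
theorem stmt_15 :
    ∀ a ∈ Set.Icc (12 / 7 : ℝ) 2, ∀ x ∈ Set.Icc (-1 : ℝ) (-3 / 4),
      0 ≤ 3 * (x + 1) ∧ 3 * (x + 1) ≤ f a x + 1 := by
  rintro a ⟨-, ha⟩ x ⟨hx₁, hx₂⟩
  exact ⟨by linarith, three_mul_add_one_le_f_add_one ha hx₁ (by linarith)⟩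
end
end
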